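/- Let T₁, T₂ be linear, trace-preserving, positive maps on M_d(ℂ), ρ₂ a stationary state of T₂, and ρ₁ := T₁^∞(ρ₂). Then ‖ρ₁ − ρ₂‖₁ ≤ τ(Z(T₁)) · ‖T₁ − T₂‖_{1→1}, where Z(T₁) = (id − (T₁ − T₁^∞))^{-1}. -/

import Mathlib

open Matrix Filter
open scoped ComplexOrder

/-- Trace norm (Schatten 1-norm) of a complex matrix: `tr √(XᴴX)`. -/
noncomputable def traceNorm {d : ℕ} (X : Matrix (Fin d) (Fin d) ℂ) : ℝ :=
  let hA := Matrix.PosSemidef.isHermitian (Matrix.posSemidef_conjTranspose_mul_self X)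
  (hA.eigenvectorUnitary.1 * diagonal (fun i => ((Real.sqrt (hA.eigenvalues i) : ℝ) : ℂ)) *
    (star hA.eigenvectorUnitary : Matrix (Fin d) (Fin d) ℂ)).trace.re

/-- Linear endomorphisms of `M_d(ℂ)` (superoperators). -/
abbrev MatEnd (d : ℕ) := Module.End ℂ (Matrix (Fin d) (Fin d) ℂ)

/-- Trace-preserving map. -/
def IsTP {d : ℕ} (T : MatEnd d) : Prop := ∀ X, (T X).trace = X.trace

/-- Positive map: maps PSD matrices to PSD matrices. -/
def IsPos {d : ℕ} (T : MatEnd d) : Prop := ∀ X, X.PosSemidef → (T X).PosSemidef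

/-- Hermiticity-preserving map. -/
def IsHP {d : ℕ} (T : MatEnd d) : Prop := ∀ X, (T X)ᴴ = T Xᴴ

/-- Induced 1→1 norm: `sup_{X ≠ 0} ‖T X‖₁ / ‖X‖₁`. -/
noncomputable def norm1to1 {d : ℕ} (T : MatEnd d) : ℝ :=
  sSup {r | ∃ X, X ≠ 0 ∧ r = traceNorm (T X) / traceNorm X}

/-- Trace-norm contraction coefficient: sup over nonzero Hermitian traceless `σ`. -/
noncomputable def tau {d : ℕ} (T : MatEnd d) : ℝ :=
  sSup {r | ∃ σ : Matrix (Fin d) (Fin d) ℂ,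
    σ.IsHermitian ∧ σ.trace = 0 ∧ σ ≠ 0 ∧ r = traceNorm (T σ) / traceNorm σ}

/-- Density matrix: positive semidefinite with unit trace. -/
def IsDensity {d : ℕ} (ρ : Matrix (Fin d) (Fin d) ℂ) : Prop := ρ.PosSemidef ∧ ρ.trace = 1

/-- `Tinf` is the Cesàro-mean fixed point projection of `T`. -/
def IsCesaroProj {d : ℕ} (T Tinf : MatEnd d) : Prop :=
  ∀ X, Tendsto (fun n : ℕ => (n : ℂ)⁻¹ • ∑ k ∈ Finset.range n, (T ^ (k + 1)) X)
    atTop (nhds (Tinf X))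

/-! Write `P = T₁^∞`. Since `T₁ P = P = P²`, the map `1 - (T₁ - P)` sends `ρ₂ - P ρ₂` to
`σ := ρ₂ - T₁ ρ₂`, so `ρ₂ - P ρ₂ = Z σ`. Positivity and trace preservation of `T₁` make `σ`
Hermitian and traceless, and `σ = -(T₁ - T₂) ρ₂` because `ρ₂` is `T₂`-stationary. Hence
`‖Z σ‖₁ ≤ τ(Z) ‖σ‖₁ ≤ τ(Z) ‖T₁ - T₂‖_{1→1} ‖ρ₂‖₁` with `‖ρ₂‖₁ = 1`. The suprema defining `τ` and
`‖·‖_{1→1}` are finite (so that `sSup` is not a junk value) because the trace norm is squeezed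
between the Frobenius norm `‖·‖_F` and `√d ‖·‖_F`. -/

section TraceNorm

attribute [local instance] Matrix.frobeniusNormedAddCommGroup Matrix.frobeniusNormedSpace

lemma Matrix.frobenius_norm_sq_eq_re_trace {m n : Type*} [Fintype m] [Fintype n]
    (X : Matrix m n ℂ) : ‖X‖ ^ 2 = (Xᴴ * X).trace.re := by
  rw [frobenius_norm_def, ← Real.rpow_natCast, ← Real.rpow_mul (by positivity)]
  simp only [trace, diag, mul_apply, conjTranspose_apply, Complex.re_sum, RCLike.star_def,
    Complex.conj_mul', ← Complex.ofReal_pow, Complex.ofReal_re]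
  norm_num
  exact Finset.sum_comm

variable {d : ℕ}

noncomputable def singularValues (X : Matrix (Fin d) (Fin d) ℂ) : Fin d → ℝ :=
  fun i => √((posSemidef_conjTranspose_mul_self X).isHermitian.eigenvalues i)

lemma traceNorm_eq_sum_singularValues (X : Matrix (Fin d) (Fin d) ℂ) :
    traceNorm X = ∑ i, singularValues X i := by
  rw [traceNorm, trace_mul_cycle, (mem_unitaryGroup_iff').mp (IsHermitian.eigenvectorUnitary _).2,
    Matrix.one_mul, trace_diagonal, Complex.re_sum]
  rfl

lemma singularValues_nonneg (X : Matrix (Fin d) (Fin d) ℂ) (i : Fin d) :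
    0 ≤ singularValues X i :=
  Real.sqrt_nonneg _

lemma traceNorm_nonneg (X : Matrix (Fin d) (Fin d) ℂ) : 0 ≤ traceNorm X := by
  rw [traceNorm_eq_sum_singularValues]
  exact Finset.sum_nonneg fun i _ => singularValues_nonneg X i

lemma frobenius_norm_sq_eq_sum_singularValues_sq (X : Matrix (Fin d) (Fin d) ℂ) :
    ‖X‖ ^ 2 = ∑ i, singularValues X i ^ 2 := by
  have hA := posSemidef_conjTranspose_mul_self X
  simp only [singularValues, Real.sq_sqrt (hA.eigenvalues_nonneg _)]
  rw [frobenius_norm_sq_eq_re_trace, hA.isHermitian.trace_eq_sum_eigenvalues, Complex.re_sum]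
  rfl

lemma frobenius_norm_le_traceNorm (X : Matrix (Fin d) (Fin d) ℂ) : ‖X‖ ≤ traceNorm X := by
  rw [← pow_le_pow_iff_left₀ (norm_nonneg X) (traceNorm_nonneg X) two_ne_zero,
    frobenius_norm_sq_eq_sum_singularValues_sq, traceNorm_eq_sum_singularValues]
  exact Finset.sum_sq_le_sq_sum_of_nonneg fun i _ => singularValues_nonneg X i

lemma traceNorm_le_sqrt_mul_frobenius_norm (X : Matrix (Fin d) (Fin d) ℂ) :
    traceNorm X ≤ √d * ‖X‖ := by
  rw [traceNorm_eq_sum_singularValues, ← Real.sqrt_sq (norm_nonneg X),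
    ← Real.sqrt_mul (Nat.cast_nonneg d), frobenius_norm_sq_eq_sum_singularValues_sq]
  apply Real.le_sqrt_of_sq_le
  simpa using sq_sum_le_card_mul_sum_sq (s := Finset.univ) (f := singularValues X)

lemma traceNorm_pos {X : Matrix (Fin d) (Fin d) ℂ} (hX : X ≠ 0) : 0 < traceNorm X :=
  (norm_pos_iff.mpr hX).trans_le (frobenius_norm_le_traceNorm X)

lemma traceNorm_zero : traceNorm (0 : Matrix (Fin d) (Fin d) ℂ) = 0 :=
  le_antisymm (by simpa using traceNorm_le_sqrt_mul_frobenius_norm (0 : Matrix (Fin d) (Fin d) ℂ))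
    (traceNorm_nonneg 0)

lemma exists_traceNorm_apply_le (L : MatEnd d) :
    ∃ C, ∀ X, traceNorm (L X) ≤ C * traceNorm X := by
  obtain ⟨C, hC₀, hC⟩ := (LinearMap.toContinuousLinearMap L).bound
  refine ⟨√d * C, fun X => ?_⟩
  calc traceNorm (L X) ≤ √d * ‖L X‖ := traceNorm_le_sqrt_mul_frobenius_norm (L X)
    _ ≤ √d * (C * ‖X‖) := by gcongr; exact hC X
    _ ≤ √d * C * traceNorm X := by
      rw [← mul_assoc]; gcongr; exact frobenius_norm_le_traceNorm X

lemma traceNorm_neg (X : Matrix (Fin d) (Fin d) ℂ) : traceNorm (-X) = traceNorm X := by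
  simp_rw [traceNorm_eq_sum_singularValues, singularValues, conjTranspose_neg, neg_mul_neg]

end TraceNorm

section OperatorNorms

variable {d : ℕ}

open scoped MatrixOrder in
lemma Matrix.PosSemidef.traceNorm_eq_re_trace {ρ : Matrix (Fin d) (Fin d) ℂ}
    (hρ : ρ.PosSemidef) : traceNorm ρ = ρ.trace.re := by
  have hρρ := posSemidef_conjTranspose_mul_self ρ
  have h : hρρ.isHermitian.cfc Real.sqrt = ρ := by
    rw [← hρρ.isHermitian.cfc_eq, ← cfcₙ_eq_cfc (hf0 := Real.sqrt_zero),
      ← CFC.sqrt_eq_real_sqrt _ hρρ.nonneg]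
    exact CFC.sqrt_unique (by rw [hρ.isHermitian.eq]) hρ.nonneg
  rw [IsHermitian.cfc, Unitary.conjStarAlgAut_apply] at h
  conv_rhs => rw [← h]
  rfl

lemma IsDensity.traceNorm_eq_one {ρ : Matrix (Fin d) (Fin d) ℂ} (hρ : IsDensity ρ) :
    traceNorm ρ = 1 := by
  rw [hρ.1.traceNorm_eq_re_trace, hρ.2, Complex.one_re]

lemma bddAbove_traceNorm_apply_div (L : MatEnd d) :
    BddAbove {r | ∃ X, X ≠ 0 ∧ r = traceNorm (L X) / traceNorm X} := by
  obtain ⟨C, hC⟩ := exists_traceNorm_apply_le L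
  refine ⟨C, ?_⟩
  rintro r ⟨X, hX, rfl⟩
  exact (div_le_iff₀ (traceNorm_pos hX)).mpr (hC X)

lemma traceNorm_apply_le_norm1to1_mul (L : MatEnd d) (X : Matrix (Fin d) (Fin d) ℂ) :
    traceNorm (L X) ≤ norm1to1 L * traceNorm X := by
  rcases eq_or_ne X 0 with rfl | hX
  · simp [traceNorm_zero]
  rw [← div_le_iff₀ (traceNorm_pos hX)]
  exact le_csSup (bddAbove_traceNorm_apply_div L) ⟨X, hX, rfl⟩

lemma traceNorm_apply_le_tau_mul (L : MatEnd d) {σ : Matrix (Fin d) (Fin d) ℂ}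
    (hσ : σ.IsHermitian) (htr : σ.trace = 0) : traceNorm (L σ) ≤ tau L * traceNorm σ := by
  rcases eq_or_ne σ 0 with rfl | hσ₀
  · simp [traceNorm_zero]
  rw [← div_le_iff₀ (traceNorm_pos hσ₀)]
  refine le_csSup ((bddAbove_traceNorm_apply_div L).mono ?_) ⟨σ, hσ, htr, hσ₀, rfl⟩
  rintro r ⟨σ', -, -, hσ', rfl⟩
  exact ⟨σ', hσ', rfl⟩

lemma tau_nonneg (L : MatEnd d) : 0 ≤ tau L :=
  Real.sSup_nonneg <| by
    rintro r ⟨σ, -, -, -, rfl⟩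
    exact div_nonneg (traceNorm_nonneg _) (traceNorm_nonneg _)

end OperatorNorms

lemma Filter.Tendsto.inv_natCast_smul_succ {𝕜 E : Type*} [RCLike 𝕜] [AddCommGroup E]
    [Module 𝕜 E] [TopologicalSpace E] [ContinuousSMul 𝕜 E] {S : ℕ → E} {a : E}
    (h : Tendsto (fun n : ℕ => (n : 𝕜)⁻¹ • S n) atTop (nhds a)) :
    Tendsto (fun n : ℕ => (n : 𝕜)⁻¹ • S (n + 1)) atTop (nhds a) := by
  have hratio : Tendsto (fun n : ℕ => ((n : 𝕜) / (n + 1))⁻¹) atTop (nhds 1) := by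
    simpa using (tendsto_natCast_div_add_atTop (1 : 𝕜)).inv₀ one_ne_zero
  have hshift : Tendsto (fun n : ℕ => ((n + 1 : ℕ) : 𝕜)⁻¹ • S (n + 1)) atTop (nhds a) :=
    h.comp (tendsto_add_atTop_nat 1)
  convert hratio.smul hshift using 1
  · ext n
    rw [smul_smul, Nat.cast_succ, inv_div, div_mul_eq_mul_div,
      mul_inv_cancel₀ (Nat.cast_add_one_ne_zero n), one_div]
  · rw [one_smul]

section Cesaro

variable {d : ℕ} {T P : MatEnd d}

lemma isCesaroProj_iff :
    IsCesaroProj T P ↔ ∀ X, Tendsto (fun n => birkhoffAverage ℂ T T n X) atTop (nhds (P X)) := by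
  have hmean : ∀ (n : ℕ) X, (n : ℂ)⁻¹ • ∑ k ∈ Finset.range n, (T ^ (k + 1)) X
      = birkhoffAverage ℂ T T n X := fun n X => by
    simp only [birkhoffAverage, birkhoffSum, Module.End.pow_apply, Function.iterate_succ_apply']
  simp only [IsCesaroProj, hmean]

lemma IsCesaroProj.apply_of_isFixedPt (hP : IsCesaroProj T P) {X : Matrix (Fin d) (Fin d) ℂ}
    (hX : Function.IsFixedPt T X) : P X = X := by
  refine tendsto_nhds_unique (isCesaroProj_iff.mp hP X) (tendsto_const_nhds.congr' ?_)
  filter_upwards [eventually_ne_atTop 0] with n hn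
  rw [hX.birkhoffAverage_eq ℂ T (Nat.cast_ne_zero.mpr hn), hX.eq]

lemma IsCesaroProj.isFixedPt (hP : IsCesaroProj T P) (X : Matrix (Fin d) (Fin d) ℂ) :
    Function.IsFixedPt T (P X) := by
  have hsum : ∀ n, T (birkhoffSum T T n X) = birkhoffSum T T (n + 1) X - T X := fun n => by
    rw [birkhoffSum_succ', add_sub_cancel_left, map_birkhoffSum]
    refine Finset.sum_congr rfl fun k _ => ?_
    rw [Function.comp_apply, Function.Commute.iterate_self T k X]
  -- `T` maps the `n`-th mean to `n⁻¹ • (birkhoffSum T T (n + 1) X - T X)`,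
  -- which also tends to `P X`.
  have hlim := (((isCesaroProj_iff.mp hP X).inv_natCast_smul_succ).sub
    ((tendsto_inv_atTop_nhds_zero_nat (𝕜 := ℂ)).smul_const (T X)))
  rw [zero_smul, sub_zero] at hlim
  refine tendsto_nhds_unique ((T.continuous_of_finiteDimensional.tendsto _).comp
    (isCesaroProj_iff.mp hP X)) (hlim.congr fun n => ?_)
  simp only [Function.comp_apply, birkhoffAverage, map_smul, hsum, smul_sub]

lemma IsCesaroProj.sub_apply_eq {Z : MatEnd d} (hP : IsCesaroProj T P)
    (hZ : Z * (1 - (T - P)) = 1) (X : Matrix (Fin d) (Fin d) ℂ) : X - P X = Z (X - T X) := by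
  have hfix : T (P X) = P X := hP.isFixedPt X
  have hidem : P (P X) = P X := hP.apply_of_isFixedPt hfix
  have hres : (1 - (T - P)) (X - P X) = X - T X := by
    simp only [LinearMap.sub_apply, Module.End.one_apply, map_sub, hfix, hidem]
    abel
  rw [← hres, ← Module.End.mul_apply, hZ, Module.End.one_apply]

end Cesaro

theorem fixed_point_perturbation_bound_general {d : ℕ} (T₁ T₂ Tinf Z : MatEnd d)
    (h₁TP : IsTP T₁) (h₁Pos : IsPos T₁)
    (hinf : IsCesaroProj T₁ Tinf)
    (hZ₁ : Z * (1 - (T₁ - Tinf)) = 1)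
    (ρ₂ : Matrix (Fin d) (Fin d) ℂ) (hρ₂ : IsDensity ρ₂) (hfix₂ : T₂ ρ₂ = ρ₂) :
    traceNorm (Tinf ρ₂ - ρ₂) ≤ tau Z * norm1to1 (T₁ - T₂) := by
  have hσ_herm : (ρ₂ - T₁ ρ₂).IsHermitian := hρ₂.1.isHermitian.sub (h₁Pos ρ₂ hρ₂.1).isHermitian
  have hσ_tr : (ρ₂ - T₁ ρ₂).trace = 0 := by rw [trace_sub, h₁TP, sub_self]
  have hσ : ρ₂ - T₁ ρ₂ = -((T₁ - T₂) ρ₂) := by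
    rw [LinearMap.sub_apply, hfix₂, neg_sub]
  calc traceNorm (Tinf ρ₂ - ρ₂) = traceNorm (Z (ρ₂ - T₁ ρ₂)) := by
        rw [← traceNorm_neg, neg_sub, hinf.sub_apply_eq hZ₁]
    _ ≤ tau Z * traceNorm (ρ₂ - T₁ ρ₂) := traceNorm_apply_le_tau_mul Z hσ_herm hσ_tr
    _ ≤ tau Z * (norm1to1 (T₁ - T₂) * traceNorm ρ₂) := by
        gcongr
        · exact tau_nonneg Z
        · rw [hσ, traceNorm_neg]
          exact traceNorm_apply_le_norm1to1_mul _ _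
    _ = tau Z * norm1to1 (T₁ - T₂) := by rw [hρ₂.traceNorm_eq_one, mul_one]

/-- perturbation bound `‖ρ₁ − ρ₂‖₁ ≤ τ(Z(T₁)) ‖T₁ − T₂‖_{1→1}`. -/
theorem fixed_point_perturbation_bound {d : ℕ} (T₁ T₂ Tinf Z : MatEnd d)
    (h₁TP : IsTP T₁) (h₁Pos : IsPos T₁) (h₂TP : IsTP T₂) (h₂Pos : IsPos T₂)
    (hinf : IsCesaroProj T₁ Tinf)
    (hZ₁ : Z * (1 - (T₁ - Tinf)) = 1) (hZ₂ : (1 - (T₁ - Tinf)) * Z = 1)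
    (ρ₂ : Matrix (Fin d) (Fin d) ℂ) (hρ₂ : IsDensity ρ₂) (hfix₂ : T₂ ρ₂ = ρ₂) :
    traceNorm (Tinf ρ₂ - ρ₂) ≤ tau Z * norm1to1 (T₁ - T₂) :=
  fixed_point_perturbation_bound_general T₁ T₂ Tinf Z h₁TP h₁Pos hinf hZ₁ ρ₂ hρ₂ hfix₂
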